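/- arXiv:0902.0695 — 4 statements merged into one kernel-verified Lean document; each statement's English description precedes it below -/
import Mathlib

section
/- For β ∈ (0,1] and a fixed lower bound p̄ ∈ [β², 1] on the worst-case success probability, the diagonal inversion N_γ = diag(γ,1) satisfies min_{x∈[0,1]} p(γ,x) ≥ p̄ if and only if γ² ≥ p̄. Moreover, among all γ with γ² ≥ p̄, the worst-case fidelity min_{x∈[0,1]} f(γ,x) is maximized at γ = √p̄. -/
open Set

/-- Success probability of the inversion `N_γ = diag(γ,1)` applied after the
contraction `M_β = diag(1,β)` on the classical state `ρ_x = diag(x,1-x)`. -/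
noncomputable def pprob (β γ x : ℝ) : ℝ := (γ ^ 2 * x + β ^ 2 * (1 - x)) / (x + β ^ 2 * (1 - x))

/-- Fidelity of the inversion `N_γ` after `M_β` on `ρ_x = diag(x,1-x)`. -/
noncomputable def fdl (β γ x : ℝ) : ℝ :=
  (γ * x + β * (1 - x)) / Real.sqrt (γ ^ 2 * x + β ^ 2 * (1 - x))

lemma fdl_nonneg (β γ x : ℝ) (hβ : 0 ≤ β) (hγ : 0 ≤ γ) (hx0 : 0 ≤ x) (hx1 : x ≤ 1) :
    0 ≤ fdl β γ x := by
  apply div_nonneg _ (Real.sqrt_nonneg _)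
  nlinarith

lemma fdl_lower (β γ x : ℝ) (hβ : 0 < β) (hβγ : β ≤ γ)
    (hx0 : 0 ≤ x) (hx1 : x ≤ 1) :
    2 * Real.sqrt (β * γ) / (β + γ) ≤ fdl β γ x := by
  have hγ : 0 < γ := lt_of_lt_of_le hβ hβγ
  have hD : 0 < γ ^ 2 * x + β ^ 2 * (1 - x) := by
    nlinarith [mul_pos hβ hβ, mul_nonneg hx0 (show (0:ℝ) ≤ γ ^ 2 - β ^ 2 by nlinarith)]
  have hs2 : Real.sqrt (γ ^ 2 * x + β ^ 2 * (1 - x)) ^ 2 = γ ^ 2 * x + β ^ 2 * (1 - x) :=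
    Real.sq_sqrt hD.le
  have hs1 : Real.sqrt (β * γ) ^ 2 = β * γ := Real.sq_sqrt (by positivity)
  have hs2pos : 0 < Real.sqrt (γ ^ 2 * x + β ^ 2 * (1 - x)) := Real.sqrt_pos.2 hD
  have hN : 0 ≤ γ * x + β * (1 - x) := by nlinarith
  rw [fdl, div_le_div_iff₀ (by positivity) hs2pos]
  have h4 : (2 * Real.sqrt (β * γ) * Real.sqrt (γ ^ 2 * x + β ^ 2 * (1 - x))) ^ 2 ≤
      ((γ * x + β * (1 - x)) * (β + γ)) ^ 2 := by
    nlinarith [sq_nonneg ((γ - β) * (β - (β + γ) * x)),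
      Real.sqrt_nonneg (β * γ), Real.sqrt_nonneg (γ ^ 2 * x + β ^ 2 * (1 - x))]
  have h5 : 0 ≤ (γ * x + β * (1 - x)) * (β + γ) := by positivity
  calc 2 * Real.sqrt (β * γ) * Real.sqrt (γ ^ 2 * x + β ^ 2 * (1 - x))
      ≤ (γ * x + β * (1 - x)) * (β + γ) := le_of_pow_le_pow_left₀ two_ne_zero h5 h4
    _ = (γ * x + β * (1 - x)) * (β + γ) := rfl

lemma fdl_val (β γ : ℝ) (hβ : 0 < β) (hβγ : β ≤ γ) :
    fdl β γ (β / (β + γ)) = 2 * Real.sqrt (β * γ) / (β + γ) := by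
  have hγ : 0 < γ := lt_of_lt_of_le hβ hβγ
  have hbg : (0:ℝ) < β + γ := by linarith
  have hD : γ ^ 2 * (β / (β + γ)) + β ^ 2 * (1 - β / (β + γ)) = β * γ := by
    field_simp
    ring
  have hs : Real.sqrt (β * γ) * Real.sqrt (β * γ) = β * γ :=
    Real.mul_self_sqrt (by positivity)
  have hspos : 0 < Real.sqrt (β * γ) := Real.sqrt_pos.2 (by positivity)
  have hN : γ * (β / (β + γ)) + β * (1 - β / (β + γ)) = 2 * β * γ / (β + γ) := by
    field_simp
    ring
  rw [fdl, hD, hN, div_div, div_eq_div_iff (by positivity) hbg.ne']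
  linear_combination (-2 * (β + γ)) * hs

lemma mono_bound (β s γ : ℝ) (hβ : 0 < β) (h1 : β ≤ s) (h2 : s ≤ γ) :
    2 * Real.sqrt (β * γ) / (β + γ) ≤ 2 * Real.sqrt (β * s) / (β + s) := by
  have hs : 0 < s := lt_of_lt_of_le hβ h1
  have hγ : 0 < γ := lt_of_lt_of_le hs h2
  have hq1 : Real.sqrt (β * γ) ^ 2 = β * γ := Real.sq_sqrt (by positivity)
  have hq2 : Real.sqrt (β * s) ^ 2 = β * s := Real.sq_sqrt (by positivity)
  rw [div_le_div_iff₀ (by linarith) (by linarith)]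
  have h4 : (2 * Real.sqrt (β * γ) * (β + s)) ^ 2 ≤ (2 * Real.sqrt (β * s) * (β + γ)) ^ 2 := by
    have e1 : (2 * Real.sqrt (β * γ) * (β + s)) ^ 2 = 4 * (β * γ) * (β + s) ^ 2 := by
      rw [mul_pow, mul_pow, hq1]; ring
    have e2 : (2 * Real.sqrt (β * s) * (β + γ)) ^ 2 = 4 * (β * s) * (β + γ) ^ 2 := by
      rw [mul_pow, mul_pow, hq2]; ring
    rw [e1, e2]
    have key : 0 ≤ (γ - s) * (s * γ - β ^ 2) := by
      apply mul_nonneg (by linarith)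
      nlinarith
    nlinarith [key, mul_nonneg hβ.le key]
  exact le_of_pow_le_pow_left₀ two_ne_zero (by positivity) h4

theorem optimal_inversion (β pbar : ℝ) (hβ : β ∈ Set.Ioc 0 1)
    (hp : pbar ∈ Set.Icc (β ^ 2) 1) :
    (∀ γ ∈ Set.Icc β 1, ((∀ x ∈ Set.Icc (0:ℝ) 1, pbar ≤ pprob β γ x) ↔ pbar ≤ γ ^ 2)) ∧
    (∀ γ ∈ Set.Icc β 1, pbar ≤ γ ^ 2 →
      sInf (fdl β γ '' Set.Icc 0 1) ≤ sInf (fdl β (Real.sqrt pbar) '' Set.Icc 0 1)) := by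
  obtain ⟨hβ0, hβ1⟩ := hβ
  obtain ⟨hp1, hp2⟩ := hp
  have hpb0 : 0 ≤ pbar := le_trans (sq_nonneg β) hp1
  constructor
  · intro γ hγ
    obtain ⟨hγβ, hγ1⟩ := hγ
    have hγ0 : 0 < γ := lt_of_lt_of_le hβ0 hγβ
    constructor
    · intro h
      have h1 := h 1 ⟨zero_le_one, le_refl 1⟩
      simpa [pprob] using h1
    · intro h x hx
      obtain ⟨hx0, hx1⟩ := hx
      refine le_trans h ?_
      have hd : 0 < x + β ^ 2 * (1 - x) := by nlinarith
      rw [pprob, le_div_iff₀ hd]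
      nlinarith [mul_nonneg (mul_nonneg (sq_nonneg β) (sub_nonneg.2 hx1))
        (sub_nonneg.2 (show γ ^ 2 ≤ 1 by nlinarith))]
  · intro γ hγ hpγ
    obtain ⟨hγβ, hγ1⟩ := hγ
    have hγ0 : 0 < γ := lt_of_lt_of_le hβ0 hγβ
    set s := Real.sqrt pbar with hs_def
    have hs2 : s ^ 2 = pbar := Real.sq_sqrt hpb0
    have hs0 : 0 ≤ s := Real.sqrt_nonneg _
    have hβs : β ≤ s := by
      have : Real.sqrt (β ^ 2) ≤ s := Real.sqrt_le_sqrt hp1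
      rwa [Real.sqrt_sq hβ0.le] at this
    have hsγ : s ≤ γ := by
      have : s ≤ Real.sqrt (γ ^ 2) := Real.sqrt_le_sqrt hpγ
      rwa [Real.sqrt_sq hγ0.le] at this
    have hbg : (0:ℝ) < β + γ := by linarith
    have hxstar : β / (β + γ) ∈ Set.Icc (0:ℝ) 1 := by
      constructor
      · positivity
      · rw [div_le_one hbg]; linarith
    have hbdd : BddBelow (fdl β γ '' Set.Icc 0 1) := by
      refine ⟨0, ?_⟩
      rintro _ ⟨x, ⟨hx0, hx1⟩, rfl⟩
      exact fdl_nonneg β γ x hβ0.le hγ0.le hx0 hx1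
    have hRne : (fdl β s '' Set.Icc 0 1).Nonempty :=
      ⟨fdl β s 0, mem_image_of_mem _ ⟨le_refl 0, zero_le_one⟩⟩
    calc sInf (fdl β γ '' Set.Icc 0 1)
        ≤ fdl β γ (β / (β + γ)) := csInf_le hbdd (mem_image_of_mem _ hxstar)
      _ = 2 * Real.sqrt (β * γ) / (β + γ) := fdl_val β γ hβ0 hγβ
      _ ≤ 2 * Real.sqrt (β * s) / (β + s) := mono_bound β s γ hβ0 hβs hsγ
      _ ≤ sInf (fdl β s '' Set.Icc 0 1) := by
          apply le_csInf hRne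
          rintro _ ⟨x, ⟨hx0, hx1⟩, rfl⟩
          exact fdl_lower β s x hβ0 hβs hx0 hx1
end

section
/- Let |ψ_±⟩ and |φ_±⟩ be unit vectors in a finite-dimensional complex Hilbert space with |⟨φ_+|φ_−⟩| ≤ |⟨ψ_+|ψ_−⟩|. Suppose a completely positive trace-non-increasing map E satisfies E(|ψ_±⟩⟨ψ_±|) = p_± |φ_±⟩⟨φ_±| with p_± > 0. Then min{p_+, p_−} ≤ (1 − |⟨ψ_+|ψ_−⟩|)/(1 − |⟨φ_+|φ_−⟩|) whenever |⟨φ_+|φ_−⟩| < |⟨ψ_+|ψ_−⟩|. -/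
open Matrix Set
open scoped ComplexOrder

/-- Square root of a positive semidefinite matrix (junk value `0` otherwise). -/
noncomputable def msqrt {n : Type*} [Fintype n] [DecidableEq n] (A : Matrix n n ℂ) :
    Matrix n n ℂ :=
  open scoped Classical in
  if h : A.PosSemidef then
    (h.1.eigenvectorUnitary : Matrix n n ℂ) * diagonal ((↑) ∘ (√·) ∘ h.1.eigenvalues) *
      (star (h.1.eigenvectorUnitary : Matrix n n ℂ)) else 0

/-- Uhlmann fidelity `F(ρ,σ) = Tr √(√ρ σ √ρ)`. -/
noncomputable def fid {n : Type*} [Fintype n] [DecidableEq n] (ρ σ : Matrix n n ℂ) : ℝ :=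
  (msqrt (msqrt ρ * σ * msqrt ρ)).trace.re

/-- The rank-one projector `|φ⟩⟨φ|` as a matrix. -/
noncomputable def outer {n : Type*} (φ : n → ℂ) : Matrix n n ℂ := Matrix.of fun i j => φ i * star (φ j)

/-- The inner product `⟨φ|ψ⟩`. -/
noncomputable def dot {n : Type*} [Fintype n] (φ ψ : n → ℂ) : ℂ := ∑ i, star (φ i) * ψ i

/-- The Choi matrix of a linear map on matrices. -/
noncomputable def choi {n : Type*} [Fintype n] [DecidableEq n]
    (E : Matrix n n ℂ →ₗ[ℂ] Matrix n n ℂ) : Matrix (n × n) (n × n) ℂ :=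
  Matrix.of fun p q => (E (Matrix.single p.1 q.1 1)) p.2 q.2

/-- A quantum operation: a completely positive (positive semidefinite Choi matrix)
trace-non-increasing linear map on matrices. -/
def IsQuantumOp {n : Type*} [Fintype n] [DecidableEq n]
    (E : Matrix n n ℂ →ₗ[ℂ] Matrix n n ℂ) : Prop :=
  (choi E).PosSemidef ∧ ∀ ρ : Matrix n n ℂ, ρ.PosSemidef → (E ρ).trace.re ≤ ρ.trace.re

/-!
Complete positivity, i.e. positivity of the Choi matrix, gives the Cauchy–Schwarz bound
`|⟨y|E(|ψ₊⟩⟨ψ₋|)|x⟩|² ≤ ⟨y|E(|ψ₊⟩⟨ψ₊|)|y⟩ ⟨x|E(|ψ₋⟩⟨ψ₋|)|x⟩ = p₊ p₋ |⟨φ₊|y⟩|² |⟨φ₋|x⟩|²`.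
Hence the cross term `E(|ψ₊⟩⟨ψ₋|)` is a multiple of `|φ₊⟩⟨φ₋|`, and its trace has modulus at most
`√(p₊ p₋) |⟨φ₊|φ₋⟩|`. Applying trace non-increase to `χ = ψ₊ + ω ψ₋`, with the phase `ω` chosen so
that `ω ⟨ψ₊|ψ₋⟩ = -|⟨ψ₊|ψ₋⟩|`, gives
`p₊ + p₋ - 2 √(p₊ p₋) |⟨φ₊|φ₋⟩| ≤ 2 - 2 |⟨ψ₊|ψ₋⟩|`,
and `min p₊ p₋ ≤ √(p₊ p₋) ≤ (p₊ + p₋) / 2` finishes.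
-/

theorem Complex.exists_norm_eq_one_mul_eq_neg_norm (z : ℂ) :
    ∃ ω : ℂ, ‖ω‖ = 1 ∧ ω * z = -‖z‖ := by
  refine ⟨-Complex.exp (-z.arg * Complex.I), ?_, ?_⟩
  · rw [norm_neg, ← Complex.ofReal_neg, Complex.norm_exp_ofReal_mul_I]
  · calc -Complex.exp (-z.arg * Complex.I) * z
        = -Complex.exp (-z.arg * Complex.I) * (‖z‖ * Complex.exp (z.arg * Complex.I)) := by
          rw [Complex.norm_mul_exp_arg_mul_I]
      _ = -‖z‖ * Complex.exp (-z.arg * Complex.I + z.arg * Complex.I) := by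
          rw [Complex.exp_add]; ring
      _ = -‖z‖ := by simp

theorem min_le_div_of_add_sub_le {p q s t : ℝ} (hp : 0 ≤ p) (hq : 0 ≤ q) (hts : t < s)
    (hs : s ≤ 1) (h : p + q - 2 * √(p * q) * t ≤ 2 - 2 * s) :
    min p q ≤ (1 - s) / (1 - t) := by
  set r := √(p * q)
  have hmin : min p q ≤ r := (Real.le_sqrt (le_min hp hq) (mul_nonneg hp hq)).mpr <|
    pow_two (min p q) ▸ mul_le_mul (min_le_left p q) (min_le_right p q) (le_min hp hq) hp
  have hamgm : 2 * r ≤ p + q := by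
    simpa [r, Real.sqrt_mul hp q, mul_assoc, hp, hq] using two_mul_le_add_sq √p √q
  have hr : r * (1 - t) ≤ 1 - s := by linarith
  rw [le_div_iff₀ (by linarith)]
  exact (mul_le_mul_of_nonneg_right hmin (by linarith)).trans hr

theorem outer_eq_vecMulVec {n : Type*} (φ : n → ℂ) : outer φ = vecMulVec φ (star φ) := rfl

theorem vecMulVec_add_smul_self {n : Type*} {ω : ℂ} (hω : ‖ω‖ = 1) (a b : n → ℂ) :
    vecMulVec (a + ω • b) (star (a + ω • b)) =
      outer a + outer b + star ω • vecMulVec a (star b) + ω • vecMulVec b (star a) := by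
  have hωω : ω * star ω = 1 := by
    rw [← starRingEnd_apply, Complex.mul_conj', hω, Complex.ofReal_one, one_pow]
  ext i j
  simp only [vecMulVec_apply, outer, of_apply, Matrix.add_apply, Matrix.smul_apply, Pi.add_apply,
    Pi.smul_apply, Pi.star_apply, star_add, star_smul, smul_eq_mul]
  linear_combination (b i * star (b j)) * hωω

section

variable {n : Type*} [Fintype n]

theorem dot_swap (a b : n → ℂ) : dot b a = star (dot a b) := star_dotProduct b a

theorem norm_dot_swap (a b : n → ℂ) : ‖dot b a‖ = ‖dot a b‖ := by
  rw [dot_swap, norm_star]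

theorem dot_sub (a x y : n → ℂ) : dot a (x - y) = dot a x - dot a y := dotProduct_sub _ _ _

theorem dot_smul (a x : n → ℂ) (c : ℂ) : dot a (c • x) = c * dot a x := dotProduct_smul _ _ _

theorem dot_self_eq_one {a : n → ℂ} (h : ∑ i, Complex.normSq (a i) = 1) : dot a a = 1 := by
  simp [dot, ← Complex.normSq_eq_conj_mul_self, ← Complex.ofReal_sum, h]

theorem dot_vecMulVec_mulVec (a b y x : n → ℂ) :
    dot y (vecMulVec a (star b) *ᵥ x) = star (dot a y) * dot b x := by
  rw [vecMulVec_mulVec, op_smul_eq_smul, dot_smul, ← dot_swap, mul_comm]; rfl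

theorem trace_vecMulVec_star (a b : n → ℂ) : (vecMulVec a (star b)).trace = dot b a := by
  rw [trace_vecMulVec, dotProduct_comm]; rfl

theorem re_trace_vecMulVec_add_smul_self {a b : n → ℂ} (ha : dot a a = 1) (hb : dot b b = 1)
    {ω : ℂ} (hω : ‖ω‖ = 1) :
    (vecMulVec (a + ω • b) (star (a + ω • b))).trace.re = 2 + 2 * (ω * dot a b).re := by
  rw [vecMulVec_add_smul_self hω]
  simp only [trace_add, trace_smul, outer_eq_vecMulVec, trace_vecMulVec_star, ha, hb, dot_swap a b,
    smul_eq_mul, ← star_mul']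
  simp only [Complex.add_re, Complex.one_re, Complex.star_def, Complex.conj_re]
  ring

theorem eq_dot_smul_of_forall_dot_eq_zero {a w : n → ℂ} (ha : dot a a = 1)
    (h : ∀ y, dot a y = 0 → dot y w = 0) : w = dot a w • a := by
  set u := w - dot a w • a
  have hau : dot a u = 0 := by rw [dot_sub, dot_smul, ha, mul_one, sub_self]
  have huu : dot u u = 0 := by
    calc dot u u = dot u w - dot a w * dot u a := by rw [dot_sub, dot_smul]
      _ = 0 := by rw [h u hau, dot_swap a u, hau, star_zero, mul_zero, sub_zero]
  exact sub_eq_zero.mp (dotProduct_star_self_eq_zero.mp huu)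

theorem eq_smul_vecMulVec_of_norm_sq_le {M : Matrix n n ℂ} {a b : n → ℂ} {K : ℝ}
    (ha : dot a a = 1) (hb : dot b b = 1)
    (h : ∀ y x, ‖dot y (M *ᵥ x)‖ ^ 2 ≤ K * (‖dot a y‖ ^ 2 * ‖dot b x‖ ^ 2)) :
    M = dot a (M *ᵥ b) • vecMulVec a (star b) := by
  have hvanish : ∀ y x, dot a y = 0 ∨ dot b x = 0 → dot y (M *ᵥ x) = 0 := by
    intro y x hyx
    have hle : ‖dot y (M *ᵥ x)‖ ^ 2 ≤ 0 := by
      rcases hyx with h0 | h0 <;> simpa [h0] using h y x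
    simpa using le_antisymm hle (sq_nonneg _)
  have hcol : ∀ x, M *ᵥ x = dot b x • M *ᵥ b := by
    intro x
    have hx : dot b (x - dot b x • b) = 0 := by rw [dot_sub, dot_smul, hb, mul_one, sub_self]
    have hw := dotProduct_star_self_eq_zero.mp (hvanish _ _ (Or.inr hx))
    rwa [mulVec_sub, mulVec_smul, sub_eq_zero] at hw
  have himage : M *ᵥ b = dot a (M *ᵥ b) • a :=
    eq_dot_smul_of_forall_dot_eq_zero ha fun y hy => hvanish y b (Or.inl hy)
  refine ext_iff_mulVec.mpr fun x => ?_
  rw [hcol x, smul_mulVec, vecMulVec_mulVec, op_smul_eq_smul]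
  conv_lhs => rw [himage]
  exact smul_comm _ _ _

theorem Matrix.PosSemidef.norm_dot_mulVec_sq_le {C : Matrix n n ℂ} (hC : C.PosSemidef)
    (u v : n → ℂ) :
    ‖dot u (C *ᵥ v)‖ ^ 2 ≤ (dot u (C *ᵥ u)).re * (dot v (C *ᵥ v)).re := by
  let := C.toSeminormedAddCommGroup hC
  let := C.toInnerProductSpace hC
  have hinner : ∀ x y : n → ℂ, (inner ℂ x y : ℂ) = dot x (C *ᵥ y) :=
    fun _ _ => dotProduct_comm _ _
  have hcs := inner_mul_inner_self_le (𝕜 := ℂ) u v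
  rw [norm_inner_symm v u, ← sq] at hcs
  simpa only [hinner, RCLike.re_to_complex] using hcs

theorem re_dot_map_outer_mulVec {E : Matrix n n ℂ →ₗ[ℂ] Matrix n n ℂ} {ψ φ : n → ℂ} {p : ℝ}
    (h : E (outer ψ) = (p : ℂ) • outer φ) (y : n → ℂ) :
    (dot y (E (vecMulVec ψ (star ψ)) *ᵥ y)).re = p * ‖dot φ y‖ ^ 2 := by
  rw [← outer_eq_vecMulVec, h, smul_mulVec, dot_smul, outer_eq_vecMulVec, dot_vecMulVec_mulVec,
    ← starRingEnd_apply, Complex.conj_mul', ← Complex.ofReal_pow, Complex.re_ofReal_mul,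
    Complex.ofReal_re]

end

section

variable {n : Type*} [Fintype n] [DecidableEq n]

theorem dot_map_vecMulVec_mulVec (E : Matrix n n ℂ →ₗ[ℂ] Matrix n n ℂ) (a b y x : n → ℂ) :
    dot y (E (vecMulVec a (star b)) *ᵥ x) =
      dot (fun p : n × n => star (a p.1) * y p.2) (choi E *ᵥ fun p => star (b p.1) * x p.2) := by
  have hexpand : vecMulVec a (star b) = ∑ k, ∑ l, (a k * star (b l)) • single k l (1 : ℂ) := by
    conv_lhs => rw [matrix_eq_sum_single (vecMulVec a (star b))]
    simp [vecMulVec_apply, smul_single]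
  rw [hexpand]
  simp only [map_sum, map_smul, dot, mulVec, dotProduct, choi, of_apply, Matrix.sum_apply,
    Matrix.smul_apply, smul_eq_mul, Fintype.sum_prod_type, Finset.mul_sum, Finset.sum_mul,
    star_mul', star_star]
  calc _ = ∑ i, ∑ k, ∑ j, ∑ l, star (y i) * (a k * star (b l) * E (single k l 1) i j * x j) :=
        Finset.sum_congr rfl fun i _ => Finset.sum_comm
    _ = ∑ k, ∑ i, ∑ j, ∑ l, star (y i) * (a k * star (b l) * E (single k l 1) i j * x j) :=
        Finset.sum_comm
    _ = _ := Finset.sum_congr rfl fun k _ => Finset.sum_congr rfl fun i _ =>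
        Finset.sum_comm.trans <| Finset.sum_congr rfl fun l _ => Finset.sum_congr rfl fun j _ => by
          ring

theorem norm_dot_map_vecMulVec_mulVec_sq_le {E : Matrix n n ℂ →ₗ[ℂ] Matrix n n ℂ}
    (hE : (choi E).PosSemidef) (a b y x : n → ℂ) :
    ‖dot y (E (vecMulVec a (star b)) *ᵥ x)‖ ^ 2 ≤
      (dot y (E (vecMulVec a (star a)) *ᵥ y)).re * (dot x (E (vecMulVec b (star b)) *ᵥ x)).re := by
  simpa only [dot_map_vecMulVec_mulVec] using hE.norm_dot_mulVec_sq_le _ _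

theorem norm_trace_map_vecMulVec_le {E : Matrix n n ℂ →ₗ[ℂ] Matrix n n ℂ}
    (hE : (choi E).PosSemidef) {ψ₁ ψ₂ φ₁ φ₂ : n → ℂ} (hφ₁ : dot φ₁ φ₁ = 1) (hφ₂ : dot φ₂ φ₂ = 1)
    {p₁ p₂ : ℝ} (h₁ : E (outer ψ₁) = (p₁ : ℂ) • outer φ₁)
    (h₂ : E (outer ψ₂) = (p₂ : ℂ) • outer φ₂) :
    ‖(E (vecMulVec ψ₁ (star ψ₂))).trace‖ ≤ √(p₁ * p₂) * ‖dot φ₁ φ₂‖ := by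
  set M := E (vecMulVec ψ₁ (star ψ₂))
  have hbound : ∀ y x, ‖dot y (M *ᵥ x)‖ ^ 2 ≤ p₁ * p₂ * (‖dot φ₁ y‖ ^ 2 * ‖dot φ₂ x‖ ^ 2) := by
    intro y x
    have hcs := norm_dot_map_vecMulVec_mulVec_sq_le hE ψ₁ ψ₂ y x
    rw [re_dot_map_outer_mulVec h₁, re_dot_map_outer_mulVec h₂] at hcs
    linarith
  have hcoeff : ‖dot φ₁ (M *ᵥ φ₂)‖ ≤ √(p₁ * p₂) :=
    abs_norm (dot φ₁ (M *ᵥ φ₂)) ▸ Real.abs_le_sqrt (by simpa [hφ₁, hφ₂] using hbound φ₁ φ₂)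
  rw [eq_smul_vecMulVec_of_norm_sq_le hφ₁ hφ₂ hbound, trace_smul, trace_vecMulVec_star,
    smul_eq_mul, norm_mul, norm_dot_swap φ₁ φ₂]
  exact mul_le_mul_of_nonneg_right hcoeff (norm_nonneg _)

theorem le_re_trace_map_vecMulVec_add_smul_self {E : Matrix n n ℂ →ₗ[ℂ] Matrix n n ℂ}
    (hE : (choi E).PosSemidef) {ψ₁ ψ₂ φ₁ φ₂ : n → ℂ} (hφ₁ : dot φ₁ φ₁ = 1) (hφ₂ : dot φ₂ φ₂ = 1)
    {p₁ p₂ : ℝ} (h₁ : E (outer ψ₁) = (p₁ : ℂ) • outer φ₁)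
    (h₂ : E (outer ψ₂) = (p₂ : ℂ) • outer φ₂) {ω : ℂ} (hω : ‖ω‖ = 1) :
    p₁ + p₂ - 2 * √(p₁ * p₂) * ‖dot φ₁ φ₂‖ ≤
      (E (vecMulVec (ψ₁ + ω • ψ₂) (star (ψ₁ + ω • ψ₂)))).trace.re := by
  have h₁₂ := norm_trace_map_vecMulVec_le hE hφ₁ hφ₂ h₁ h₂
  have h₂₁ := norm_trace_map_vecMulVec_le hE hφ₂ hφ₁ h₂ h₁
  rw [mul_comm p₂, norm_dot_swap] at h₂₁
  have hcross : ∀ c T : ℂ, ‖c‖ = 1 → -‖T‖ ≤ (c * T).re := fun c T hc => by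
    simpa [hc] using neg_le_of_abs_le (Complex.abs_re_le_norm (c * T))
  rw [vecMulVec_add_smul_self hω, map_add, map_add, map_add, map_smul, map_smul, h₁, h₂]
  simp only [trace_add, trace_smul, outer_eq_vecMulVec, trace_vecMulVec_star, hφ₁, hφ₂,
    smul_eq_mul, mul_one, Complex.add_re, Complex.ofReal_re]
  linarith [hcross (star ω) (E (vecMulVec ψ₁ (star ψ₂))).trace (by rwa [norm_star]),
    hcross ω (E (vecMulVec ψ₂ (star ψ₁))).trace hω]

end

theorem prob_bound_pure_targets {d : ℕ} (ψp ψm φp φm : Fin d → ℂ)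
    (hψp : ∑ i, Complex.normSq (ψp i) = 1) (hψm : ∑ i, Complex.normSq (ψm i) = 1)
    (hφp : ∑ i, Complex.normSq (φp i) = 1) (hφm : ∑ i, Complex.normSq (φm i) = 1)
    (E : Matrix (Fin d) (Fin d) ℂ →ₗ[ℂ] Matrix (Fin d) (Fin d) ℂ) (hE : IsQuantumOp E)
    (pp pm : ℝ) (hpp : 0 < pp) (hpm : 0 < pm)
    (hEp : E (outer ψp) = (pp : ℂ) • outer φp)
    (hEm : E (outer ψm) = (pm : ℂ) • outer φm)
    (hov : ‖dot φp φm‖ < ‖dot ψp ψm‖) :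
    min pp pm ≤ (1 - ‖dot ψp ψm‖) / (1 - ‖dot φp φm‖) := by
  obtain ⟨hChoi, hTrace⟩ := hE
  obtain ⟨ω, hω, hωψ⟩ := Complex.exists_norm_eq_one_mul_eq_neg_norm (dot ψp ψm)
  set ρ := vecMulVec (ψp + ω • ψm) (star (ψp + ω • ψm))
  have hρ_psd : ρ.PosSemidef := posSemidef_vecMulVec_self_star _
  have hρ : ρ.trace.re = 2 - 2 * ‖dot ψp ψm‖ := by
    rw [re_trace_vecMulVec_add_smul_self (dot_self_eq_one hψp) (dot_self_eq_one hψm) hω, hωψ]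
    simp only [Complex.neg_re, Complex.ofReal_re]
    ring
  have hEρ := le_re_trace_map_vecMulVec_add_smul_self hChoi (dot_self_eq_one hφp)
    (dot_self_eq_one hφm) hEp hEm hω
  exact min_le_div_of_add_sub_le hpp.le hpm.le hov
    (by linarith [(Complex.nonneg_iff.mp hρ_psd.trace_nonneg).1])
    (by linarith [hTrace ρ hρ_psd])
end

section
/- Let a, b ∈ [0,1) with b ≤ a, and define the curve F(p) = cos((arccos b − arccos(1 − (1−a)/p))/2) for p ∈ [(1−a)/(1−b), 1]. Then F is continuous and monotonically decreasing in p on this interval, with F((1−a)/(1−b)) = 1 and F(1) = cos((arccos b − arccos a)/2). -/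
open Set

/-- The optimal probability–fidelity tradeoff curve, where `a = |⟨ψ₊|ψ₋⟩|` and
`b = |⟨φ₊|φ₋⟩|`. -/
noncomputable def tradeoffCurve (a b p : ℝ) : ℝ :=
  Real.cos ((Real.arccos b - Real.arccos (1 - (1 - a) / p)) / 2)

/-!
`tradeoffCurve a b` is `x ↦ cos ((arccos b - arccos x) / 2)` composed with `p ↦ 1 - (1 - a) / p`.
The inner map is increasing on `p > 0` and sends `[(1 - a) / (1 - b), ∞)` into `[b, ∞)`; there the
angle `arccos b - arccos x` lies in `[0, π]`, because `arccos` is antitone with values in `[0, π]`,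
so the outer map is antitone.
-/

open Real

lemma antitoneOn_cos_half_arccos_sub (b : ℝ) :
    AntitoneOn (fun x => cos ((arccos b - arccos x) / 2)) (Ici b) := by
  intro x hx y hy hxy
  have angle_mem (z : ℝ) (hz : b ≤ z) : (arccos b - arccos z) / 2 ∈ Icc 0 π := by
    have := antitone_arccos hz
    constructor <;> linarith [arccos_nonneg z, arccos_le_pi b]
  refine antitoneOn_cos (angle_mem x hx) (angle_mem y hy) ?_
  linarith [antitone_arccos hxy]

lemma monotoneOn_one_sub_div {c : ℝ} (hc : 0 ≤ c) : MonotoneOn (fun p => 1 - c / p) (Ioi 0) :=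
  fun _ hp _ _ hpq => sub_le_sub_left (div_le_div_of_nonneg_left hc hp hpq) 1

lemma le_one_sub_div_of_div_le {a b p : ℝ} (hb : b < 1) (hp0 : 0 < p)
    (hp : (1 - a) / (1 - b) ≤ p) : b ≤ 1 - (1 - a) / p := by
  have h1b : 0 < 1 - b := sub_pos.2 hb
  have : 1 - a ≤ (1 - b) * p := by rwa [div_le_iff₀' h1b] at hp
  have : (1 - a) / p ≤ 1 - b := (div_le_iff₀ hp0).2 this
  linarith

lemma antitoneOn_tradeoffCurve {a b : ℝ} (ha : a < 1) (hb : b < 1) :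
    AntitoneOn (tradeoffCurve a b) (Ici ((1 - a) / (1 - b))) := by
  have hL : 0 < (1 - a) / (1 - b) := div_pos (sub_pos.2 ha) (sub_pos.2 hb)
  exact (antitoneOn_cos_half_arccos_sub b).comp_MonotoneOn
    ((monotoneOn_one_sub_div (sub_pos.2 ha).le).mono (Ici_subset_Ioi.2 hL))
    fun p hp => le_one_sub_div_of_div_le hb (hL.trans_le hp) hp

lemma continuousAt_tradeoffCurve (a b : ℝ) {p : ℝ} (hp : p ≠ 0) :
    ContinuousAt (tradeoffCurve a b) p := by
  unfold tradeoffCurve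
  fun_prop (disch := exact hp)

lemma tradeoffCurve_div_one_sub {a : ℝ} (ha : a ≠ 1) (b : ℝ) :
    tradeoffCurve a b ((1 - a) / (1 - b)) = 1 := by
  simp [tradeoffCurve, div_div_cancel₀ (sub_ne_zero.2 ha.symm)]

lemma tradeoffCurve_one (a b : ℝ) :
    tradeoffCurve a b 1 = cos ((arccos b - arccos a) / 2) := by
  simp [tradeoffCurve]

theorem tradeoff_curve_properties_general (a b : ℝ) (ha : a ∈ Set.Ico 0 1) (hb : b ∈ Set.Ico 0 1) :
    ContinuousOn (tradeoffCurve a b) (Set.Icc ((1 - a) / (1 - b)) 1) ∧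
    AntitoneOn (tradeoffCurve a b) (Set.Icc ((1 - a) / (1 - b)) 1) ∧
    tradeoffCurve a b ((1 - a) / (1 - b)) = 1 ∧
    tradeoffCurve a b 1 = Real.cos ((Real.arccos b - Real.arccos a) / 2) := by
  have hL : 0 < (1 - a) / (1 - b) := div_pos (sub_pos.2 ha.2) (sub_pos.2 hb.2)
  exact ⟨fun p hp => (continuousAt_tradeoffCurve a b (hL.trans_le hp.1).ne').continuousWithinAt,
    (antitoneOn_tradeoffCurve ha.2 hb.2).mono Icc_subset_Ici_self,
    tradeoffCurve_div_one_sub ha.2.ne b, tradeoffCurve_one a b⟩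

theorem tradeoff_curve_properties (a b : ℝ) (ha : a ∈ Set.Ico 0 1) (hb : b ∈ Set.Ico 0 1)
    (hba : b ≤ a) :
    ContinuousOn (tradeoffCurve a b) (Set.Icc ((1 - a) / (1 - b)) 1) ∧
    AntitoneOn (tradeoffCurve a b) (Set.Icc ((1 - a) / (1 - b)) 1) ∧
    tradeoffCurve a b ((1 - a) / (1 - b)) = 1 ∧
    tradeoffCurve a b 1 = Real.cos ((Real.arccos b - Real.arccos a) / 2) :=
  tradeoff_curve_properties_general a b ha hb
end

section
/- For β ∈ (0,1], x ∈ [0,1], and γ = √p̄ with p̄ ∈ [β²,1], the worst-case fidelity F(p̄) = min_{x∈[0,1]} (√p̄ x + β(1−x))/√(p̄ x + β²(1−x)) is a nondecreasing function of β for fixed p̄, and tends to 1 as β → 1. -/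
open Set

/-- The optimal worst-case fidelity of the semiclassical inversion with success
probability at least `pbar`: the inversion `N_{√pbar}` is used. -/
noncomputable def worstFid (β pbar : ℝ) : ℝ :=
  sInf (fdl β (Real.sqrt pbar) '' Set.Icc 0 1)

lemma E2_pos {β γ x : ℝ} (hβ : 0 < β) (hβγ : β ≤ γ) (hx0 : 0 ≤ x) (hx1 : x ≤ 1) :
    0 < γ ^ 2 * x + β ^ 2 * (1 - x) := by
  have hsq : β ^ 2 ≤ γ ^ 2 := by nlinarith
  nlinarith [mul_nonneg (sub_nonneg.2 hsq) hx0, pow_pos hβ 2]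

lemma fdl_lb {β γ x : ℝ} (hβ : 0 < β) (hβγ : β ≤ γ) (hγ : γ ≤ 1)
    (hx : x ∈ Icc (0:ℝ) 1) : Real.sqrt β ≤ fdl β γ x := by
  obtain ⟨hx0, hx1⟩ := hx
  have hE : 0 < γ ^ 2 * x + β ^ 2 * (1 - x) := E2_pos hβ hβγ hx0 hx1
  have hN : 0 ≤ γ * x + β * (1 - x) := by nlinarith
  have key : β * (γ ^ 2 * x + β ^ 2 * (1 - x)) ≤ (γ * x + β * (1 - x)) ^ 2 := by
    have h1 : 0 ≤ (γ * x + β * (1 - x)) * (x * (γ - β) + β * (1 - γ)) :=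
      mul_nonneg hN (add_nonneg (mul_nonneg hx0 (sub_nonneg.2 hβγ))
        (mul_nonneg hβ.le (sub_nonneg.2 hγ)))
    have h2 : 0 ≤ β ^ 2 * (1 - x) * (γ - β) :=
      mul_nonneg (mul_nonneg (sq_nonneg β) (sub_nonneg.2 hx1)) (sub_nonneg.2 hβγ)
    nlinarith [h1, h2]
  rw [fdl, le_div_iff₀ (Real.sqrt_pos.2 hE)]
  have hm : Real.sqrt β * Real.sqrt (γ ^ 2 * x + β ^ 2 * (1 - x))
      = Real.sqrt (β * (γ ^ 2 * x + β ^ 2 * (1 - x))) := (Real.sqrt_mul hβ.le _).symm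
  rw [hm]
  calc Real.sqrt (β * (γ ^ 2 * x + β ^ 2 * (1 - x)))
      ≤ Real.sqrt ((γ * x + β * (1 - x)) ^ 2) := Real.sqrt_le_sqrt key
    _ = γ * x + β * (1 - x) := Real.sqrt_sq hN

lemma fdl_mono {β₁ β₂ γ x : ℝ} (h1 : 0 < β₁) (h12 : β₁ ≤ β₂) (h2γ : β₂ ≤ γ)
    (hx : x ∈ Icc (0:ℝ) 1) : fdl β₁ γ x ≤ fdl β₂ γ x := by
  obtain ⟨hx0, hx1⟩ := hx
  have hb : (0:ℝ) ≤ 1 - x := sub_nonneg.2 hx1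
  have hE1 : 0 < γ ^ 2 * x + β₁ ^ 2 * (1 - x) := E2_pos h1 (h12.trans h2γ) hx0 hx1
  have hE2 : 0 < γ ^ 2 * x + β₂ ^ 2 * (1 - x) := E2_pos (h1.trans_le h12) h2γ hx0 hx1
  have hγ0 : 0 < γ := h1.trans_le (h12.trans h2γ)
  have hN1 : 0 ≤ γ * x + β₁ * (1 - x) := by nlinarith
  have hN2 : 0 ≤ γ * x + β₂ * (1 - x) := by nlinarith
  rw [fdl, fdl, div_le_div_iff₀ (Real.sqrt_pos.2 hE1) (Real.sqrt_pos.2 hE2)]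
  have key : (γ * x + β₁ * (1 - x)) ^ 2 * (γ ^ 2 * x + β₂ ^ 2 * (1 - x))
      ≤ (γ * x + β₂ * (1 - x)) ^ 2 * (γ ^ 2 * x + β₁ ^ 2 * (1 - x)) := by
    have expand : (γ * x + β₂ * (1 - x)) ^ 2 * (γ ^ 2 * x + β₁ ^ 2 * (1 - x))
        - (γ * x + β₁ * (1 - x)) ^ 2 * (γ ^ 2 * x + β₂ ^ 2 * (1 - x))
        = γ * x * (1 - x) * (β₂ - β₁) *
          (γ * x * (2 * γ - β₁ - β₂) + (1 - x) * (γ * (β₁ + β₂) - 2 * β₁ * β₂)) := by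
      ring
    have h2γ' : 0 ≤ 2 * γ - β₁ - β₂ := by linarith
    have hgb : 0 ≤ γ * (β₁ + β₂) - 2 * β₁ * β₂ := by nlinarith
    have hγx : 0 ≤ γ * x := mul_nonneg hγ0.le hx0
    have hpos : 0 ≤ γ * x * (1 - x) * (β₂ - β₁) *
        (γ * x * (2 * γ - β₁ - β₂) + (1 - x) * (γ * (β₁ + β₂) - 2 * β₁ * β₂)) := by
      apply mul_nonneg
      · exact mul_nonneg (mul_nonneg hγx hb) (sub_nonneg.2 h12)
      · exact add_nonneg (mul_nonneg hγx h2γ') (mul_nonneg hb hgb)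
    linarith [expand, hpos]
  calc (γ * x + β₁ * (1 - x)) * Real.sqrt (γ ^ 2 * x + β₂ ^ 2 * (1 - x))
      = Real.sqrt ((γ * x + β₁ * (1 - x)) ^ 2 * (γ ^ 2 * x + β₂ ^ 2 * (1 - x))) := by
        rw [Real.sqrt_mul (sq_nonneg _), Real.sqrt_sq hN1]
    _ ≤ Real.sqrt ((γ * x + β₂ * (1 - x)) ^ 2 * (γ ^ 2 * x + β₁ ^ 2 * (1 - x))) :=
        Real.sqrt_le_sqrt key
    _ = (γ * x + β₂ * (1 - x)) * Real.sqrt (γ ^ 2 * x + β₁ ^ 2 * (1 - x)) := by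
        rw [Real.sqrt_mul (sq_nonneg _), Real.sqrt_sq hN2]

lemma sqrt_lb_worstFid {β q : ℝ} (hβ0 : 0 < β) (hβ1 : β ≤ 1) (hq0 : β ^ 2 ≤ q)
    (hq1 : q ≤ 1) : Real.sqrt β ≤ worstFid β q := by
  have hβγ : β ≤ Real.sqrt q := by
    rw [show β = Real.sqrt (β ^ 2) from (Real.sqrt_sq hβ0.le).symm]
    exact Real.sqrt_le_sqrt hq0
  have hγ1 : Real.sqrt q ≤ 1 := Real.sqrt_le_one.2 hq1
  refine le_csInf ⟨_, mem_image_of_mem _ (left_mem_Icc.2 zero_le_one)⟩ ?_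
  rintro y ⟨x, hx, rfl⟩
  exact fdl_lb hβ0 hβγ hγ1 hx

theorem worstFid_monotone_and_limit (pbar : ℝ) (hpbar : pbar ∈ Set.Icc 0 1) :
    (∀ β₁ β₂ : ℝ, β₁ ∈ Set.Ioc 0 1 → β₂ ∈ Set.Ioc 0 1 → β₁ ≤ β₂ →
      β₁ ^ 2 ≤ pbar → β₂ ^ 2 ≤ pbar → worstFid β₁ pbar ≤ worstFid β₂ pbar) ∧
    (∀ ε > (0 : ℝ), ∃ δ > (0 : ℝ), ∀ β ∈ Set.Ioc (0:ℝ) 1, 1 - δ < β →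
      ∀ q ∈ Set.Icc (β ^ 2) 1, 1 - ε < worstFid β q) := by
  obtain ⟨hp0, hp1⟩ := hpbar
  constructor
  · rintro β₁ β₂ ⟨hβ₁0, hβ₁1⟩ ⟨hβ₂0, hβ₂1⟩ h12 hs1 hs2
    set γ := Real.sqrt pbar with hγdef
    have hβ₂γ : β₂ ≤ γ := by
      rw [hγdef, show β₂ = Real.sqrt (β₂ ^ 2) from (Real.sqrt_sq hβ₂0.le).symm]
      exact Real.sqrt_le_sqrt hs2
    have hβ₁γ : β₁ ≤ γ := h12.trans hβ₂γ
    have hγ1 : γ ≤ 1 := Real.sqrt_le_one.2 hp1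
    have hbdd : BddBelow (fdl β₁ γ '' Icc 0 1) := by
      refine ⟨Real.sqrt β₁, ?_⟩
      rintro y ⟨x, hx, rfl⟩
      exact fdl_lb hβ₁0 hβ₁γ hγ1 hx
    refine le_csInf ⟨_, mem_image_of_mem _ (left_mem_Icc.2 zero_le_one)⟩ ?_
    rintro y ⟨x, hx, rfl⟩
    exact (csInf_le hbdd (mem_image_of_mem _ hx)).trans (fdl_mono hβ₁0 h12 hβ₂γ hx)
  · intro ε hε
    refine ⟨ε, hε, ?_⟩
    rintro β ⟨hβ0, hβ1⟩ hδ q ⟨hq0, hq1⟩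
    have h1 : Real.sqrt β ≤ worstFid β q := sqrt_lb_worstFid hβ0 hβ1 hq0 hq1
    have h2 : β ≤ Real.sqrt β := by
      nth_rewrite 1 [show β = Real.sqrt (β ^ 2) from (Real.sqrt_sq hβ0.le).symm]
      exact Real.sqrt_le_sqrt (by nlinarith)
    linarith
end
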